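/- Let n, p be positive integers with 2p ≤ n, and let Y, Y' ∈ ℝ^{n×p} both have orthonormal columns (YᵀY = I_p and Y'ᵀY' = I_p). Let σ_1 ≥ σ_2 ≥ … ≥ σ_p ≥ 0 be the singular values of the p×p matrix YᵀY', and define the principal angles θ_i := arccos(σ_{p−i+1}) ∈ [0, π/2] for i = 1, …, p. Then there exist an orthonormal family y_1, …, y_{2p} of vectors in ℝⁿ and orthogonal matrices P, Q ∈ ℝ^{p×p} such that YP = [y_1, …, y_p] and Y'Q = [cos(θ_1) y_1 + sin(θ_1) y_{p+1}, …, cos(θ_p) y_p + sin(θ_p) y_{2p}] (the matrix whose i-th column is cos(θ_i) y_i + sin(θ_i) y_{p+i}). -/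

import Mathlib

/-!
Rotating `Y` and `Y'` by the factors of the SVD gives orthonormal bases `uᵢ = (YA)eᵢ`,
`vᵢ = (Y'B)eᵢ` of the two column spaces with `⟪uᵢ, vⱼ⟫ = δᵢⱼ σᵢ`. The parts
`wᵢ = vᵢ - σᵢ uᵢ` are orthogonal to every `uⱼ` and to each other, with `‖wᵢ‖ = √(1 - σᵢ²)`.
So the `uᵢ` together with the normalised nonzero `wᵢ` form an orthonormal family, which
`2p ≤ n` lets us complete to `2p` orthonormal vectors, and then
`vᵢ = cos θ · uᵢ + sin θ · wᵢ/‖wᵢ‖` with `cos θ = σᵢ`. Reversing the order of the columns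
turns the decreasing `σᵢ` into increasing angles.
-/

open Matrix

open scoped RealInnerProductSpace

theorem Orthonormal.exists_orthonormal_extension_of_card_le {𝕜 E κ : Type*} [RCLike 𝕜]
    [NormedAddCommGroup E] [InnerProductSpace 𝕜 E] [FiniteDimensional 𝕜 E] [Fintype κ]
    (hcard : Fintype.card κ ≤ Module.finrank 𝕜 E) {g : κ → E} {s : Set κ}
    (hg : Orthonormal 𝕜 (s.domRestrict g)) :
    ∃ e : κ → E, Orthonormal 𝕜 e ∧ ∀ k ∈ s, e k = g k := by
  have hg' : Orthonormal 𝕜 ((Sum.inl '' s).domRestrict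
      (Sum.elim g 0 : κ ⊕ Fin (Module.finrank 𝕜 E - Fintype.card κ) → E)) := by
    refine ⟨?_, ?_⟩
    · rintro ⟨_, k, hk, rfl⟩
      exact hg.1 ⟨k, hk⟩
    · rintro ⟨_, a, ha, rfl⟩ ⟨_, b, hb, rfl⟩ hab
      exact hg.2 (i := ⟨a, ha⟩) (j := ⟨b, hb⟩) fun h => hab (by simp_all)
  obtain ⟨b, hb⟩ := hg'.exists_orthonormalBasis_extension_of_card_eq (by simp; omega)
  exact ⟨b ∘ Sum.inl, b.orthonormal.comp _ Sum.inl_injective,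
    fun k hk => hb (Sum.inl k) ⟨k, hk, rfl⟩⟩

theorem exists_orthonormal_normalize_of_pairwise_inner_eq_zero {E κ : Type*}
    [NormedAddCommGroup E] [InnerProductSpace ℝ E] [FiniteDimensional ℝ E] [Fintype κ]
    (hcard : Fintype.card κ ≤ Module.finrank ℝ E) {f : κ → E}
    (hf : Pairwise fun a b => ⟪f a, f b⟫ = 0) :
    ∃ e : κ → E, Orthonormal ℝ e ∧ ∀ k, f k ≠ 0 → e k = ‖f k‖⁻¹ • f k := by
  refine Orthonormal.exists_orthonormal_extension_of_card_le hcard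
    (s := {k | f k ≠ 0}) ⟨fun k => norm_smul_inv_norm k.2, fun a b hab => ?_⟩
  simp only [Set.domRestrict_apply, real_inner_smul_left, real_inner_smul_right,
    hf (Subtype.coe_injective.ne hab), mul_zero]

section PrincipalFrame

variable {E ι : Type*} [NormedAddCommGroup E] [InnerProductSpace ℝ E] {u v : ι → E}

theorem inner_sub_inner_smul_eq_zero_of_biorthogonal (hu : Orthonormal ℝ u)
    (huv : Pairwise fun i j => ⟪u i, v j⟫ = 0) (i j : ι) :
    ⟪u i, v j - ⟪u j, v j⟫ • u j⟫ = 0 := by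
  rw [inner_sub_right, real_inner_smul_right]
  rcases eq_or_ne i j with rfl | hij
  · rw [real_inner_self_eq_norm_sq, hu.1, one_pow, mul_one, sub_self]
  · rw [huv hij, hu.2 hij, mul_zero, sub_zero]

theorem inner_sub_inner_smul_of_biorthogonal (hu : Orthonormal ℝ u)
    (huv : Pairwise fun i j => ⟪u i, v j⟫ = 0) (i j : ι) :
    ⟪v i - ⟪u i, v i⟫ • u i, v j - ⟪u j, v j⟫ • u j⟫ = ⟪v i, v j⟫ - ⟪u j, v j⟫ * ⟪u j, v i⟫ := by
  rw [inner_sub_left, real_inner_smul_left, inner_sub_inner_smul_eq_zero_of_biorthogonal hu huv,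
    mul_zero, sub_zero, inner_sub_right, real_inner_smul_right, real_inner_comm (u j)]

theorem exists_orthonormal_principal_frame [FiniteDimensional ℝ E] [Fintype ι]
    (hu : Orthonormal ℝ u) (hv : Orthonormal ℝ v) (huv : Pairwise fun i j => ⟪u i, v j⟫ = 0)
    (hcard : 2 * Fintype.card ι ≤ Module.finrank ℝ E) :
    ∃ e : ι ⊕ ι → E, Orthonormal ℝ e ∧ (∀ i, e (.inl i) = u i) ∧
      ∀ i, v i = Real.cos (Real.arccos ⟪u i, v i⟫) • u i +
        Real.sin (Real.arccos ⟪u i, v i⟫) • e (.inr i) := by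
  set w : ι → E := fun i => v i - ⟪u i, v i⟫ • u i with hw
  have hww : Pairwise fun i j => ⟪w i, w j⟫ = 0 := fun i j hij => by
    simp only [hw]
    rw [inner_sub_inner_smul_of_biorthogonal hu huv, hv.2 hij, huv hij.symm, mul_zero, sub_zero]
  have hw_norm (i : ι) : ‖w i‖ = √(1 - ⟪u i, v i⟫ ^ 2) := by
    rw [← Real.sqrt_sq (norm_nonneg _), ← real_inner_self_eq_norm_sq, hw,
      inner_sub_inner_smul_of_biorthogonal hu huv, real_inner_self_eq_norm_sq, hv.1, sq]
    ring_nf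
  have hf : Pairwise fun a b => ⟪Sum.elim u w a, Sum.elim u w b⟫ = 0 := by
    rintro (i | i) (j | j) hij
    · exact hu.2 fun h => hij (congrArg _ h)
    · exact inner_sub_inner_smul_eq_zero_of_biorthogonal hu huv i j
    · exact (real_inner_comm _ _).trans (inner_sub_inner_smul_eq_zero_of_biorthogonal hu huv j i)
    · exact hww fun h => hij (congrArg _ h)
  obtain ⟨e, he, hef⟩ := exists_orthonormal_normalize_of_pairwise_inner_eq_zero
    (by simpa [two_mul] using hcard) hf
  refine ⟨e, he, fun i => ?_, fun i => ?_⟩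
  · rw [hef (.inl i) (hu.ne_zero i), Sum.elim_inl, hu.1, inv_one, one_smul]
  have hwe : w i = ‖w i‖ • e (.inr i) := by
    rcases eq_or_ne (w i) 0 with h | h
    · rw [h, norm_zero, zero_smul]
    · rw [hef (.inr i) h, Sum.elim_inr, smul_inv_smul₀ (norm_ne_zero_iff.2 h)]
  have hτ : |⟪u i, v i⟫| ≤ 1 := by
    simpa [hu.1, hv.1] using abs_real_inner_le_norm (u i) (v i)
  rw [Real.cos_arccos (abs_le.1 hτ).1 (abs_le.1 hτ).2, Real.sin_arccos, ← hw_norm, ← hwe, hw,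
    add_sub_cancel]

end PrincipalFrame

theorem Matrix.orthonormal_toLp_transpose_of_conjTranspose_mul_self {𝕜 m ι : Type*} [RCLike 𝕜]
    [Fintype m] [DecidableEq ι] {U : Matrix m ι 𝕜} (hU : Uᴴ * U = 1) :
    Orthonormal 𝕜 fun i => WithLp.toLp 2 (Uᵀ i) := by
  rw [orthonormal_iff_ite]
  intro i j
  rw [inner_matrix_col_col, hU, one_apply]

theorem Orthonormal.dotProduct_ofLp_eq_ite {m ι : Type*} [Fintype m] [DecidableEq ι]
    {e : ι → EuclideanSpace ℝ m} (he : Orthonormal ℝ e) (i j : ι) :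
    WithLp.ofLp (e i) ⬝ᵥ WithLp.ofLp (e j) = if i = j then 1 else 0 := by
  rw [← orthonormal_iff_ite.1 he i j, EuclideanSpace.inner_eq_star_dotProduct, star_trivial,
    dotProduct_comm]

theorem Matrix.transpose_submatrix_id_mul_submatrix_id {R m n o k l : Type*} [Fintype m]
    [Mul R] [AddCommMonoid R] (M : Matrix m n R) (N : Matrix m o R) (e₁ : k → n) (e₂ : l → o) :
    (M.submatrix id e₁)ᵀ * N.submatrix id e₂ = (Mᵀ * N).submatrix e₁ e₂ := by
  rw [transpose_submatrix, ← submatrix_mul _ _ _ _ _ Function.bijective_id]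

/-- Jordan's principal angles: normal form of a pair of subspaces.
Let `2p ≤ n` and let `Y, Y' ∈ ℝ^{n×p}` have orthonormal columns. Let
`σ₁ ≥ … ≥ σₚ ≥ 0` be the singular values of `YᵀY'` (witnessed by an SVD
`YᵀY' = A (diag σ) Bᵀ` with `A, B` orthogonal) and set `θᵢ = arccos(σ_{p−i+1})`.
Then there exist an orthonormal family `y₁, …, y_{2p}` of `ℝⁿ` and orthogonal
matrices `P, Q` with `YP = [y₁, …, yₚ]` and
`Y'Q = [cos(θ₁)y₁ + sin(θ₁)y_{p+1}, …, cos(θₚ)yₚ + sin(θₚ)y_{2p}]`. -/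
theorem principal_angles_normal_form
    (n p : ℕ) (h2p : 2 * p ≤ n)
    (Y Y' : Matrix (Fin n) (Fin p) ℝ)
    (hY : Yᵀ * Y = 1) (hY' : Y'ᵀ * Y' = 1)
    (σ : Fin p → ℝ) (A B : Matrix (Fin p) (Fin p) ℝ)
    (hA : Aᵀ * A = 1) (hB : Bᵀ * B = 1)
    (hSVD : Yᵀ * Y' = A * Matrix.diagonal σ * Bᵀ) :
    ∃ (y : Fin (2 * p) → Fin n → ℝ) (P Q : Matrix (Fin p) (Fin p) ℝ),
      (∀ i j : Fin (2 * p), y i ⬝ᵥ y j = if i = j then (1 : ℝ) else 0) ∧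
      Pᵀ * P = 1 ∧ Qᵀ * Q = 1 ∧
      (∀ (i : Fin p) (r : Fin n),
        (Y * P) r i = y ⟨i.val, by have := i.isLt; omega⟩ r) ∧
      (∀ (i : Fin p) (r : Fin n),
        (Y' * Q) r i =
          Real.cos (Real.arccos (σ i.rev)) * y ⟨i.val, by have := i.isLt; omega⟩ r +
          Real.sin (Real.arccos (σ i.rev)) * y ⟨p + i.val, by have := i.isLt; omega⟩ r) := by
  have gram (M N : Matrix (Fin n) (Fin p) ℝ) (C D : Matrix (Fin p) (Fin p) ℝ) :
      (M * C)ᴴ * (N * D) = Cᵀ * (Mᵀ * N) * D := by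
    simp only [conjTranspose_eq_transpose_of_trivial, transpose_mul, Matrix.mul_assoc]
  have hU : (Y * A)ᴴ * (Y * A) = 1 := by rw [gram, hY, Matrix.mul_one, hA]
  have hV : (Y' * B)ᴴ * (Y' * B) = 1 := by rw [gram, hY', Matrix.mul_one, hB]
  have huv (i j : Fin p) :
      ⟪WithLp.toLp 2 ((Y * A)ᵀ i), WithLp.toLp 2 ((Y' * B)ᵀ j)⟫ = diagonal σ i j := by
    rw [inner_matrix_col_col, gram, hSVD, Matrix.mul_assoc, Matrix.mul_assoc, hB, Matrix.mul_one,
      ← Matrix.mul_assoc, hA, Matrix.one_mul]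
  obtain ⟨e, he, he_inl, he_inr⟩ := exists_orthonormal_principal_frame
    (orthonormal_toLp_transpose_of_conjTranspose_mul_self hU)
    (orthonormal_toLp_transpose_of_conjTranspose_mul_self hV)
    (fun i j hij => (huv i j).trans (diagonal_apply_ne _ hij)) (by simpa using h2p)
  let idx : Fin (2 * p) ≃ Fin p ⊕ Fin p := (finCongr (two_mul p)).trans
    (finSumFinEquiv.symm.trans (Equiv.sumCongr Fin.revPerm Fin.revPerm))
  have idx_lo (i : Fin p) : idx ⟨i, by omega⟩ = .inl i.rev :=
    congrArg (Sum.map _ _) (finSumFinEquiv_symm_apply_castAdd i)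
  have idx_hi (i : Fin p) : idx ⟨p + i, by omega⟩ = .inr i.rev :=
    congrArg (Sum.map _ _) (finSumFinEquiv_symm_apply_natAdd i)
  refine ⟨fun k => WithLp.ofLp (e (idx k)), A.submatrix id Fin.revPerm,
    B.submatrix id Fin.revPerm, (he.comp idx idx.injective).dotProduct_ofLp_eq_ite,
    by rw [transpose_submatrix_id_mul_submatrix_id, hA, submatrix_one_equiv],
    by rw [transpose_submatrix_id_mul_submatrix_id, hB, submatrix_one_equiv],
    fun i r => ?_, fun i r => ?_⟩
  · simp only [idx_lo, he_inl]
    rfl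
  · refine (congrArg (fun x : EuclideanSpace ℝ (Fin n) => x r) (he_inr i.rev)).trans ?_
    simp only [huv, diagonal_apply_eq, idx_lo, idx_hi, he_inl]
    rfl
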